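/- Let n be a positive integer and K a field of characteristic zero containing a primitive n-th root of unity ζ. Let L/K be a finite Galois field extension of degree 2n and suppose there are σ, τ in the Galois group Gal(L/K) such that σ has order n, τ has order 2, τ ∘ σ ∘ τ = σ⁻¹, and σ and τ generate Gal(L/K) (so Gal(L/K) is dihedral of order 2n). Then there exist an element x ∈ L and elements a, F ∈ K such that L = K(x), x^(2n) − 2·a·x^n + F^n = 0, σ(x) = ζ·x, and x·τ(x) = F. -/

import Mathlib

/-!
As a `K`-linear map `σ` has minimal polynomial `X ^ n - 1`, so it has an eigenvector `x` with
eigenvalue `ζ`, and `τ σ τ = σ⁻¹` gives `σ (τ x) = ζ⁻¹ τ x`. Then `x τ x` and `x ^ n + (τ x) ^ n`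
are fixed by `σ` and `τ`, hence lie in `K`, and `x` is a root of
`X ^ (2n) - (x ^ n + (τ x) ^ n) X ^ n + (x τ x) ^ n`.

`x` generates `L` iff no automorphism `≠ 1` fixes it. Powers of `σ` never do, and since
`⟨σ⟩` has index two the other automorphisms are the `g` with `τ g = σ ^ k`; such a `g` fixes `x`
only if `τ x = ζ ^ k x`. Replacing `x` by `(m + c) x`, with `m` fixed by `σ` but not in `K` and
`c ∈ K`, keeps it a `ζ`-eigenvector, and as `c ↦ τ (m + c) / (m + c)` is injective on the
infinite field `K`, some `c` avoids the finitely many bad ratios.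
-/

open IntermediateField Polynomial

variable {K L : Type*} [Field K] [Field L] [Algebra K L]

theorem Subgroup.index_zpowers_eq_two {G : Type*} [Group G] [Finite G] {σ : G}
    (h : Nat.card G = 2 * orderOf σ) : (Subgroup.zpowers σ).index = 2 := by
  have := (Subgroup.zpowers σ).card_mul_index
  rw [Nat.card_zpowers, h, mul_comm 2] at this
  exact Nat.eq_of_mul_eq_mul_left (orderOf_pos σ) this

theorem Subgroup.notMem_of_closure_pair_eq_top {G : Type*} [Group G] {H : Subgroup G} {σ τ : G}
    (hH : H ≠ ⊤) (hσ : σ ∈ H) (hgen : Subgroup.closure {σ, τ} = ⊤) : τ ∉ H := fun hτ ↦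
  hH <| top_le_iff.mp <| hgen ▸ (Subgroup.closure_le H).mpr (Set.insert_subset hσ
    (Set.singleton_subset_iff.mpr hτ))

theorem IsGalois.mem_range_algebraMap_of_closure_eq_top [IsGalois K L] {S : Set (L ≃ₐ[K] L)}
    (hS : Subgroup.closure S = ⊤) {y : L} (hy : ∀ g ∈ S, g y = y) :
    y ∈ Set.range (algebraMap K L) := by
  refine (InfiniteGalois.mem_range_algebraMap_iff_fixed y).mpr fun g ↦ ?_
  have hle : Subgroup.closure S ≤ MulAction.stabilizer (L ≃ₐ[K] L) y :=
    (Subgroup.closure_le _).mpr hy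
  exact hle (hS ▸ Subgroup.mem_top g)

theorem IntermediateField.adjoin_simple_eq_top_of_forall_apply_eq_self [IsGalois K L]
    [FiniteDimensional K L] {x : L} (hx : ∀ g : L ≃ₐ[K] L, g x = x → g = 1) : K⟮x⟯ = ⊤ := by
  have : K⟮x⟯.fixingSubgroup = ⊥ :=
    eq_bot_iff.mpr fun g hg ↦ hx g (hg ⟨x, mem_adjoin_simple_self K x⟩)
  rw [← IsGalois.fixedField_fixingSubgroup K⟮x⟯, this, fixedField_bot]

namespace AlgEquiv

theorem exists_ne_zero_apply_eq_algebraMap_mul [FiniteDimensional K L] (σ : L ≃ₐ[K] L)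
    {ζ : K} (hζ : ζ ^ orderOf σ = 1) : ∃ v : L, v ≠ 0 ∧ σ v = algebraMap K L ζ * v := by
  have hroot : (minpoly K σ.toLinearMap).IsRoot ζ := by
    simp [minpoly_algEquiv_toLinearMap σ (isOfFinOrder_of_finite σ), hζ]
  obtain ⟨v, hv⟩ := (Module.End.hasEigenvalue_of_isRoot hroot).exists_hasEigenvector
  exact ⟨v, hv.2, by simpa [Algebra.smul_def] using hv.apply_eq_smul⟩

section Eigenvector

variable {g : L ≃ₐ[K] L} {c : K} {v : L}

theorem inv_apply_of_apply_eq_algebraMap_mul (h : g v = algebraMap K L c * v) :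
    g⁻¹ v = algebraMap K L c⁻¹ * v := by
  rcases eq_or_ne c 0 with rfl | hc
  · rw [map_zero, zero_mul, map_eq_zero_iff g g.injective] at h
    simp [h]
  rw [aut_inv, symm_apply_eq, map_mul, commutes, h, ← mul_assoc, ← map_mul,
    inv_mul_cancel₀ hc, map_one, one_mul]

theorem pow_apply_of_apply_eq_algebraMap_mul (h : g v = algebraMap K L c * v) (m : ℕ) :
    (g ^ m) v = algebraMap K L (c ^ m) * v := by
  induction m with
  | zero => simp
  | succ m ih => rw [pow_succ, mul_apply, h, map_mul, commutes, ih, pow_succ, map_mul]; ring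

theorem zpow_apply_of_apply_eq_algebraMap_mul (h : g v = algebraMap K L c * v) (k : ℤ) :
    (g ^ k) v = algebraMap K L (c ^ k) * v := by
  cases k with
  | ofNat m => simpa using pow_apply_of_apply_eq_algebraMap_mul h m
  | negSucc m =>
    rw [zpow_negSucc, zpow_negSucc]
    exact inv_apply_of_apply_eq_algebraMap_mul (pow_apply_of_apply_eq_algebraMap_mul h _)

end Eigenvector

theorem add_algebraMap_ne_zero {τ : L ≃ₐ[K] L} {m : L} (hm : τ m ≠ m) (c : K) :
    m + algebraMap K L c ≠ 0 := by
  intro h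
  rw [add_eq_zero_iff_eq_neg, ← map_neg] at h
  exact hm (by rw [h, commutes])

theorem injective_apply_add_algebraMap_div {τ : L ≃ₐ[K] L} {m : L} (hm : τ m ≠ m) :
    Function.Injective fun c : K ↦ τ (m + algebraMap K L c) / (m + algebraMap K L c) := by
  intro c c' h
  simp only [map_add, commutes] at h
  rw [div_eq_div_iff (add_algebraMap_ne_zero hm c) (add_algebraMap_ne_zero hm c')] at h
  have : (algebraMap K L c - algebraMap K L c') * (m - τ m) = 0 := by linear_combination h
  rcases mul_eq_zero.mp this with h | h
  · exact (algebraMap K L).injective (sub_eq_zero.mp h)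
  · exact absurd (sub_eq_zero.mp h).symm hm

theorem exists_apply_eq_algebraMap_mul_forall_apply_ne [Infinite K] {σ τ : L ≃ₐ[K] L} {ζ : K}
    {m v : L} (hσm : σ m = m) (hτm : τ m ≠ m) (hv : v ≠ 0) (hσv : σ v = algebraMap K L ζ * v)
    {T : Set K} (hT : T.Finite) :
    ∃ x : L, x ≠ 0 ∧ σ x = algebraMap K L ζ * x ∧ ∀ w ∈ T, τ x ≠ algebraMap K L w * x := by
  have hτv : τ v ≠ 0 := (map_ne_zero_iff τ τ.injective).mpr hv
  obtain ⟨_, ⟨c, rfl⟩, hc⟩ := (Set.infinite_range_of_injective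
    (injective_apply_add_algebraMap_div hτm)).exists_notMem_finite
    (hT.image fun w ↦ algebraMap K L w * v / τ v)
  have hmc := add_algebraMap_ne_zero hτm c
  refine ⟨(m + algebraMap K L c) * v, mul_ne_zero hmc hv, ?_, fun w hw heq ↦ hc ⟨w, hw, ?_⟩⟩
  · rw [map_mul, map_add, hσm, commutes, hσv]
    ring
  · rw [map_mul] at heq
    field_simp
    linear_combination -heq

theorem exists_apply_eq_self_apply_ne [IsGalois K L] [FiniteDimensional K L] {σ τ : L ≃ₐ[K] L}
    (hσ : Subgroup.zpowers σ ≠ ⊤) (hgen : Subgroup.closure {σ, τ} = ⊤) :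
    ∃ m : L, σ m = m ∧ τ m ≠ m := by
  obtain ⟨m, hmσ, hm⟩ : ∃ m ∈ fixedField (Subgroup.zpowers σ), m ∉ (⊥ : IntermediateField K L) :=
    SetLike.exists_of_lt <| bot_lt_iff_ne_bot.mpr fun h ↦ hσ <| by
      rw [← fixingSubgroup_fixedField (Subgroup.zpowers σ), h, fixingSubgroup_bot]
  have hσm : σ m = m := hmσ ⟨σ, Subgroup.mem_zpowers σ⟩
  refine ⟨m, hσm, fun hτm ↦ hm <| mem_bot.mpr <|
    IsGalois.mem_range_algebraMap_of_closure_eq_top hgen ?_⟩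
  rintro g (rfl | rfl) <;> assumption

theorem eq_one_of_apply_eq_self_of_index_zpowers_eq_two {σ τ g : L ≃ₐ[K] L} {ζ : K}
    (hζ : IsPrimitiveRoot ζ (orderOf σ)) (hidx : (Subgroup.zpowers σ).index = 2)
    (hτ : τ ∉ Subgroup.zpowers σ) {x : L} (hx0 : x ≠ 0) (hσx : σ x = algebraMap K L ζ * x)
    (hτx : ∀ w : K, w ^ orderOf σ = 1 → τ x ≠ algebraMap K L w * x) (hg : g x = x) :
    g = 1 := by
  by_cases hgσ : g ∈ Subgroup.zpowers σ
  · obtain ⟨k, rfl⟩ := Subgroup.mem_zpowers_iff.mp hgσ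
    rw [zpow_apply_of_apply_eq_algebraMap_mul hσx] at hg
    have : algebraMap K L (ζ ^ k) = algebraMap K L 1 := by
      rw [map_one]
      exact mul_right_cancel₀ hx0 (hg.trans (one_mul x).symm)
    exact orderOf_dvd_iff_zpow_eq_one.mp
      ((hζ.zpow_eq_one_iff_dvd k).mp ((algebraMap K L).injective this))
  · obtain ⟨k, hk⟩ := Subgroup.mem_zpowers_iff.mp
      ((Subgroup.mul_mem_iff_of_index_two hidx).mpr (iff_of_false hτ hgσ))
    refine absurd ?_ (hτx (ζ ^ k) ?_)
    · calc τ x = (τ * g) x := by rw [mul_apply, hg]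
        _ = _ := by rw [← hk, zpow_apply_of_apply_eq_algebraMap_mul hσx k]
    · rw [← zpow_natCast, ← zpow_mul, mul_comm, zpow_mul, zpow_natCast, hζ.pow_eq_one, one_zpow]

variable {σ τ : L ≃ₐ[K] L} {c : K} {x : L}

theorem apply_apply_eq_algebraMap_inv_mul (hrel : τ * σ * τ = σ⁻¹) (hτ : τ * τ = 1)
    (hx : σ x = algebraMap K L c * x) : σ (τ x) = algebraMap K L c⁻¹ * τ x := by
  have hστ : σ * τ = τ * σ⁻¹ := by rw [← hrel, ← mul_assoc, ← mul_assoc, hτ, one_mul]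
  calc σ (τ x) = (τ * σ⁻¹) x := by rw [← hστ, mul_apply]
    _ = _ := by rw [mul_apply, inv_apply_of_apply_eq_algebraMap_mul hx, map_mul, commutes]

theorem mul_apply_mem_range_algebraMap [IsGalois K L] (hgen : Subgroup.closure {σ, τ} = ⊤)
    (hτ : τ * τ = 1) (hσx : σ x = algebraMap K L c * x)
    (hστx : σ (τ x) = algebraMap K L c⁻¹ * τ x) (hc : c ≠ 0) :
    x * τ x ∈ Set.range (algebraMap K L) := by
  refine IsGalois.mem_range_algebraMap_of_closure_eq_top hgen ?_
  rintro g (rfl | rfl)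
  · rw [map_mul, hσx, hστx, mul_mul_mul_comm, ← map_mul, mul_inv_cancel₀ hc, map_one, one_mul]
  · rw [map_mul, ← mul_apply, hτ, one_apply, mul_comm]

theorem pow_add_apply_pow_mem_range_algebraMap [IsGalois K L]
    (hgen : Subgroup.closure {σ, τ} = ⊤) (hτ : τ * τ = 1) (hσx : σ x = algebraMap K L c * x)
    (hστx : σ (τ x) = algebraMap K L c⁻¹ * τ x) {n : ℕ} (hc : c ^ n = 1) :
    x ^ n + τ x ^ n ∈ Set.range (algebraMap K L) := by
  refine IsGalois.mem_range_algebraMap_of_closure_eq_top hgen ?_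
  rintro g (rfl | rfl)
  · rw [map_add, map_pow, map_pow, hσx, hστx, mul_pow, mul_pow, ← map_pow, ← map_pow, inv_pow,
      hc, inv_one, map_one, one_mul, one_mul]
  · rw [map_add, map_pow, map_pow, ← mul_apply, hτ, one_apply, add_comm]

end AlgEquiv

open AlgEquiv in
theorem dihedral_galois_extension_building_data
    (n : ℕ) (hn : 0 < n)
    (K L : Type) [Field K] [Field L] [Algebra K L] [CharZero K]
    [IsGalois K L] (hdeg : Module.finrank K L = 2 * n)
    (ζ : K) (hζ : IsPrimitiveRoot ζ n)
    (σ τ : L ≃ₐ[K] L)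
    (hσ : orderOf σ = n) (hτ : orderOf τ = 2)
    (hrel : τ * σ * τ = σ⁻¹)
    (hgen : Subgroup.closure ({σ, τ} : Set (L ≃ₐ[K] L)) = ⊤) :
    ∃ (x : L) (a F : K),
      IntermediateField.adjoin K {x} = ⊤ ∧
      x ^ (2 * n) - 2 * algebraMap K L a * x ^ n + (algebraMap K L F) ^ n = 0 ∧
      σ x = algebraMap K L ζ * x ∧
      x * τ x = algebraMap K L F := by
  have : FiniteDimensional K L := Module.finite_of_finrank_pos (by omega)
  subst hσ
  have hτ2 : τ * τ = 1 := by rw [← sq, ← hτ, pow_orderOf_eq_one]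
  have hidx : (Subgroup.zpowers σ).index = 2 :=
    Subgroup.index_zpowers_eq_two (by rw [IsGalois.card_aut_eq_finrank, hdeg])
  have hσ_ne_top : Subgroup.zpowers σ ≠ ⊤ := fun h ↦ by simp [h] at hidx
  have hτσ : τ ∉ Subgroup.zpowers σ :=
    Subgroup.notMem_of_closure_pair_eq_top hσ_ne_top (Subgroup.mem_zpowers σ) hgen
  obtain ⟨x₀, hx₀, hσx₀⟩ := σ.exists_ne_zero_apply_eq_algebraMap_mul hζ.pow_eq_one
  obtain ⟨m, hσm, hτm⟩ := exists_apply_eq_self_apply_ne hσ_ne_top hgen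
  obtain ⟨x, hx, hσx, hτx⟩ := exists_apply_eq_algebraMap_mul_forall_apply_ne hσm hτm hx₀ hσx₀
    (T := {w : K | w ^ orderOf σ = 1}) (nthRootsFinset_toSet hn (1 : K) ▸ Finset.finite_toSet _)
  have hστx := apply_apply_eq_algebraMap_inv_mul hrel hτ2 hσx
  obtain ⟨F, hF⟩ := mul_apply_mem_range_algebraMap hgen hτ2 hσx hστx (hζ.ne_zero hn.ne')
  obtain ⟨A, hA⟩ := pow_add_apply_pow_mem_range_algebraMap hgen hτ2 hσx hστx hζ.pow_eq_one
  refine ⟨x, A / 2, F, adjoin_simple_eq_top_of_forall_apply_eq_self fun g ↦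
    eq_one_of_apply_eq_self_of_index_zpowers_eq_two hζ hidx hτσ hx hσx hτx,
    ?_, hσx, hF.symm⟩
  rw [← map_ofNat (algebraMap K L) 2, ← map_mul, mul_div_cancel₀ A two_ne_zero, hA, hF, two_mul,
    pow_add, mul_pow]
  ring
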